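/- Let α > 0, β ∈ ℝ, and k ∈ ℕ. Then Σ_{j=0}^k c_j^{(k)} E_{α, β-j}(z) = O(z^k) as |z| → 0; more precisely, the entire function z ↦ Σ_{j=0}^k c_j^{(k)} E_{α,β-j}(z) has a zero of order at least k at z = 0. -/

import Mathlib

/-- The Mittag-Leffler function `E_{α,β}(z) = ∑_{j=0}^∞ z^j / Γ(αj+β)`. -/
noncomputable def mittagLeffler (α β : ℝ) (z : ℂ) : ℂ :=
  ∑' j : ℕ, z ^ j / Complex.Gamma ((α * j + β : ℝ) : ℂ)

/-- The Djrbashian coefficients `c_j^{(k)}`. -/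
noncomputable def djcoef (α β : ℝ) : ℕ → ℕ → ℝ
  | 0, j => if j = 0 then 1 else 0
  | (k + 1), j =>
    if j = 0 then (1 - β - α * k) * djcoef α β k 0
    else if j = k + 1 then 1
    else djcoef α β k (j - 1) + (1 - β - α * k + j) * djcoef α β k j

open Finset Filter

/-- Log-convexity lower bound: `Γ(x+α) ≥ Γ(x) * exp(α log (x-1))` for `x ≥ 2`. -/
lemma gamma_growth {α x : ℝ} (hα : 0 < α) (hx : 2 ≤ x) :
    Real.Gamma x * Real.exp (α * Real.log (x - 1)) ≤ Real.Gamma (x + α) := by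
  have h0 : (0:ℝ) < x - 1 := by linarith
  have hxpos : (0:ℝ) < x := by linarith
  have hslope := Real.convexOn_log_Gamma.slope_mono_adjacent
    (x := x - 1) (y := x) (z := x + α)
    (by simp [Set.mem_Ioi]; linarith) (by simp [Set.mem_Ioi]; linarith)
    (by linarith) (by linarith)
  have hrec : Real.Gamma x = (x - 1) * Real.Gamma (x - 1) := by
    have := Real.Gamma_add_one (s := x - 1) h0.ne'
    simpa using this
  have hG1 : 0 < Real.Gamma (x - 1) := Real.Gamma_pos_of_pos h0
  have hGx : 0 < Real.Gamma x := Real.Gamma_pos_of_pos hxpos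
  have hlog : (Real.log ∘ Real.Gamma) x - (Real.log ∘ Real.Gamma) (x - 1) = Real.log (x - 1) := by
    simp only [Function.comp_apply]
    rw [hrec, Real.log_mul h0.ne' hG1.ne']
    ring
  rw [show x - (x - 1) = 1 by ring] at hslope
  rw [hlog] at hslope
  simp only [div_one, show x + α - x = α by ring] at hslope
  have h2 : α * Real.log (x - 1) ≤ (Real.log ∘ Real.Gamma) (x + α) - (Real.log ∘ Real.Gamma) x := by
    rw [le_div_iff₀ hα] at hslope
    linarith [hslope]
  have hGxa : 0 < Real.Gamma (x + α) := Real.Gamma_pos_of_pos (by linarith)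
  calc Real.Gamma x * Real.exp (α * Real.log (x - 1))
      ≤ Real.Gamma x * Real.exp ((Real.log ∘ Real.Gamma) (x + α) - (Real.log ∘ Real.Gamma) x) := by
        exact mul_le_mul_of_nonneg_left (Real.exp_le_exp.2 h2) hGx.le
    _ = Real.Gamma (x + α) := by
        simp only [Function.comp_apply, Real.exp_sub, Real.exp_log hGxa, Real.exp_log hGx]
        field_simp


lemma summable_inv_gamma_mul {α : ℝ} (γ : ℝ) (hα : 0 < α) {r : ℝ} (hr : 0 ≤ r) :
    Summable fun n : ℕ => ‖(Complex.Gamma ((α * n + γ : ℝ) : ℂ))⁻¹‖ * r ^ n := by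
  apply summable_of_ratio_norm_eventually_le (r := 1/2) (by norm_num)
  have hx : Tendsto (fun n : ℕ => α * n + γ) atTop atTop :=
    tendsto_atTop_add_const_right _ γ
      ((tendsto_natCast_atTop_atTop (R := ℝ)).const_mul_atTop hα)
  have hev1 : ∀ᶠ n : ℕ in atTop, 2 ≤ α * n + γ := hx.eventually_ge_atTop 2
  have hexp : Tendsto (fun n : ℕ => Real.exp (α * Real.log (α * n + γ - 1))) atTop atTop := by
    apply Real.tendsto_exp_atTop.comp
    apply Tendsto.const_mul_atTop hα
    exact Real.tendsto_log_atTop.comp (tendsto_atTop_add_const_right _ (-1) hx |>.congr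
      (fun n => by ring))
  have hev2 : ∀ᶠ n : ℕ in atTop, 2 * r ≤ Real.exp (α * Real.log (α * n + γ - 1)) :=
    hexp.eventually_ge_atTop (2 * r)
  filter_upwards [hev1, hev2] with n h2 hbig
  set x : ℝ := α * n + γ with hxdef
  have hx1 : α * (n + 1 : ℕ) + γ = x + α := by push_cast; ring
  rw [hx1]
  rw [Complex.Gamma_ofReal, Complex.Gamma_ofReal]
  have hGx : 0 < Real.Gamma x := Real.Gamma_pos_of_pos (by linarith)
  have hGxa : 0 < Real.Gamma (x + α) := Real.Gamma_pos_of_pos (by linarith)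
  set E : ℝ := Real.exp (α * Real.log (x - 1)) with hEdef
  have hE : 0 < E := Real.exp_pos _
  have hnorm1 : ‖((Real.Gamma (x + α) : ℂ))⁻¹‖ = (Real.Gamma (x + α))⁻¹ := by
    rw [norm_inv, Complex.norm_real, Real.norm_eq_abs, abs_of_pos hGxa]
  have hnorm2 : ‖((Real.Gamma x : ℂ))⁻¹‖ = (Real.Gamma x)⁻¹ := by
    rw [norm_inv, Complex.norm_real, Real.norm_eq_abs, abs_of_pos hGx]
  rw [hnorm1, hnorm2]
  rw [Real.norm_of_nonneg (by positivity), Real.norm_of_nonneg (by positivity)]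
  have hgg := gamma_growth hα h2
  have key : (Real.Gamma (x + α))⁻¹ * r ≤ 1 / 2 * (Real.Gamma x)⁻¹ := by
    have h3 : (Real.Gamma (x + α))⁻¹ ≤ (Real.Gamma x * E)⁻¹ := by
      apply inv_anti₀ (by positivity) hgg
    calc (Real.Gamma (x + α))⁻¹ * r ≤ (Real.Gamma x * E)⁻¹ * r := by gcongr
      _ = (r / E) * (Real.Gamma x)⁻¹ := by rw [mul_inv, div_eq_mul_inv]; ring
      _ ≤ 1 / 2 * (Real.Gamma x)⁻¹ := by
          refine mul_le_mul_of_nonneg_right ?_ (inv_nonneg.2 hGx.le)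
          rw [div_le_div_iff₀ hE (by norm_num)]
          linarith
  calc (Real.Gamma (x + α))⁻¹ * r ^ (n + 1)
      = ((Real.Gamma (x + α))⁻¹ * r) * r ^ n := by rw [pow_succ]; ring
    _ ≤ (1 / 2 * (Real.Gamma x)⁻¹) * r ^ n :=
        mul_le_mul_of_nonneg_right key (pow_nonneg hr n)
    _ = 1 / 2 * ((Real.Gamma x)⁻¹ * r ^ n) := by ring

lemma summable_ML {α : ℝ} (γ : ℝ) (hα : 0 < α) (z : ℂ) :
    Summable fun n : ℕ => (Complex.Gamma ((α * n + γ : ℝ) : ℂ))⁻¹ * z ^ n := by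
  apply Summable.of_norm
  have := summable_inv_gamma_mul γ hα (r := ‖z‖) (norm_nonneg z)
  refine this.congr fun n => ?_
  rw [norm_mul, norm_pow]


lemma inv_gamma_sub_one (t : ℂ) :
    (Complex.Gamma (t - 1))⁻¹ = (t - 1) * (Complex.Gamma t)⁻¹ := by
  by_cases h : t - 1 = 0
  · rw [h, Complex.Gamma_zero, inv_zero, zero_mul]
  · have := Complex.Gamma_add_one (t - 1) h
    rw [sub_add_cancel] at this
    rw [this, mul_inv, ← mul_assoc, mul_inv_cancel₀ h, one_mul]

lemma inv_gamma_sub_nat (t : ℂ) (j : ℕ) :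
    (Complex.Gamma (t - j))⁻¹ = (∏ i ∈ range j, (t - (i + 1))) * (Complex.Gamma t)⁻¹ := by
  induction j with
  | zero => simp
  | succ j ih =>
    have h1 : t - (j + 1 : ℕ) = (t - j) - 1 := by push_cast; ring
    rw [h1, inv_gamma_sub_one, ih, prod_range_succ]
    push_cast
    ring

lemma djcoef_self (α β : ℝ) (k : ℕ) : djcoef α β k k = 1 := by
  cases k with
  | zero => simp [djcoef]
  | succ k => simp [djcoef]

lemma djcoef_zero (α β : ℝ) (k : ℕ) :
    djcoef α β (k + 1) 0 = (1 - β - α * k) * djcoef α β k 0 := by simp [djcoef]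

lemma djcoef_mid (α β : ℝ) (k j : ℕ) (hj : j < k) :
    djcoef α β (k + 1) (j + 1) =
      djcoef α β k j + (1 - β - α * k + (j + 1)) * djcoef α β k (j + 1) := by
  have h1 : j + 1 ≠ 0 := Nat.succ_ne_zero j
  have h2 : j + 1 ≠ k + 1 := by omega
  simp only [djcoef, if_neg h1, if_neg h2, Nat.add_sub_cancel]
  push_cast
  ring

lemma key_poly (α β : ℝ) (k : ℕ) (s : ℂ) :
    ∑ j ∈ range (k + 1), (djcoef α β k j : ℂ) * ∏ i ∈ range j, (s - (i + 1)) =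
      ∏ m ∈ range k, (s - (α * m + β : ℝ)) := by
  induction k with
  | zero => simp [djcoef]
  | succ k ih =>
    rw [prod_range_succ, ← ih, Finset.sum_mul]
    have expand : ∀ j ∈ range (k + 1),
        (djcoef α β k j : ℂ) * (∏ i ∈ range j, (s - (i + 1))) * (s - ((α * k + β : ℝ) : ℂ)) =
        (djcoef α β k j : ℂ) * (∏ i ∈ range (j + 1), (s - (i + 1))) +
          (1 - (β : ℂ) - (α : ℂ) * k + j) * ((djcoef α β k j : ℂ) *
            ∏ i ∈ range j, (s - (i + 1))) := by
      intro j _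
      rw [prod_range_succ]
      push_cast
      ring
    rw [Finset.sum_congr rfl expand, Finset.sum_add_distrib]
    rw [Finset.sum_range_succ
      (fun j => (djcoef α β k j : ℂ) * ∏ i ∈ range (j + 1), (s - (i + 1)))]
    rw [Finset.sum_range_succ' (fun j => (1 - (β : ℂ) - (α : ℂ) * k + j) *
      ((djcoef α β k j : ℂ) * ∏ i ∈ range j, (s - (i + 1))))]
    rw [Finset.sum_range_succ'
      (fun j => (djcoef α β (k + 1) j : ℂ) * ∏ i ∈ range j, (s - (i + 1)))]
    rw [Finset.sum_range_succ
      (fun j => (djcoef α β (k + 1) (j + 1) : ℂ) * ∏ i ∈ range (j + 1), (s - (i + 1)))]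
    rw [djcoef_self α β k, djcoef_zero α β k,
      show k + 1 = k + 1 from rfl]
    have hself : djcoef α β (k + 1) (k + 1) = 1 := djcoef_self α β (k + 1)
    rw [hself]
    rw [Finset.sum_congr rfl fun j (hj : j ∈ range k) => by
      rw [djcoef_mid α β k j (mem_range.1 hj)]]
    push_cast
    simp only [add_mul, mul_assoc, zero_mul, one_mul, mul_one, add_zero]
    simp only [Finset.sum_add_distrib]
    ring


set_option maxHeartbeats 1000000 in
/-- The entire function `z ↦ ∑_{j=0}^k c_j^{(k)} E_{α,β-j}(z)` has a zero of order at
least `k` at `z = 0`; in particular it is `O(z^k)` as `|z| → 0`. -/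
theorem djcoef_sum_mittagLeffler_isBigO (α β : ℝ) (hα : 0 < α) (k : ℕ) :
    (∃ g : ℂ → ℂ, Differentiable ℂ g ∧
        ∀ z : ℂ, ∑ j ∈ Finset.range (k + 1), (djcoef α β k j : ℂ) *
            mittagLeffler α (β - j) z = z ^ k * g z) ∧
      (fun z : ℂ => ∑ j ∈ Finset.range (k + 1), (djcoef α β k j : ℂ) *
          mittagLeffler α (β - j) z) =O[nhds 0] fun z => z ^ k := by
  classical
  set a : ℕ → ℂ := fun n => ∑ j ∈ Finset.range (k + 1), (djcoef α β k j : ℂ) *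
      (Complex.Gamma ((α * n + (β - j) : ℝ) : ℂ))⁻¹ with ha_def
  set b : ℕ → ℂ := fun n => a (n + k) with hb_def
  have hsum_a : ∀ r : ℝ, 0 ≤ r → Summable (fun n => ‖a n‖ * r ^ n) := by
    intro r hr
    have hS : Summable (fun n : ℕ => ∑ j ∈ Finset.range (k + 1),
        ‖(djcoef α β k j : ℂ)‖ * (‖(Complex.Gamma ((α * n + (β - j) : ℝ) : ℂ))⁻¹‖ * r ^ n)) := by
      apply summable_sum
      intro j _
      exact (summable_inv_gamma_mul (β - j) hα hr).mul_left _
    refine Summable.of_nonneg_of_le (fun n => by positivity) (fun n => ?_) hS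
    calc ‖a n‖ * r ^ n ≤ (∑ j ∈ Finset.range (k + 1),
          ‖(djcoef α β k j : ℂ) * (Complex.Gamma ((α * n + (β - j) : ℝ) : ℂ))⁻¹‖) * r ^ n :=
          mul_le_mul_of_nonneg_right (norm_sum_le _ _) (pow_nonneg hr n)
      _ = _ := by
          rw [Finset.sum_mul]
          exact Finset.sum_congr rfl fun j _ => by rw [norm_mul]; ring
  have hsum_b : ∀ r : NNReal,
      Summable (fun n => ‖FormalMultilinearSeries.ofScalars ℂ b n‖ * (r : ℝ) ^ n) := by
    intro r
    simp only [FormalMultilinearSeries.ofScalars_norm]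
    have h1 : Summable (fun n => ‖a (n + k)‖ * (max (r : ℝ) 1) ^ (n + k)) :=
      (summable_nat_add_iff k).2 (hsum_a _ (le_max_of_le_right zero_le_one))
    refine Summable.of_nonneg_of_le (fun n => by positivity) (fun n => ?_) h1
    have hb : b n = a (n + k) := rfl
    rw [hb]
    refine mul_le_mul_of_nonneg_left ?_ (norm_nonneg _)
    calc (r : ℝ) ^ n ≤ (max (r : ℝ) 1) ^ n :=
          pow_le_pow_left₀ r.coe_nonneg (le_max_left _ _) n
      _ ≤ (max (r : ℝ) 1) ^ (n + k) :=
          pow_le_pow_right₀ (le_max_right _ _) (Nat.le_add_right n k)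
  have hrad : (FormalMultilinearSeries.ofScalars ℂ b).radius = ⊤ :=
    FormalMultilinearSeries.radius_eq_top_of_summable_norm _ hsum_b
  set g : ℂ → ℂ := (FormalMultilinearSeries.ofScalars ℂ b).sum with hg_def
  have hball : HasFPowerSeriesOnBall g (FormalMultilinearSeries.ofScalars ℂ b) 0
      (FormalMultilinearSeries.ofScalars ℂ b).radius :=
    FormalMultilinearSeries.hasFPowerSeriesOnBall _ (by rw [hrad]; exact ENNReal.zero_lt_top)
  have hgdiff : Differentiable ℂ g := by
    intro z
    have hz : z ∈ EMetric.ball (0 : ℂ) (FormalMultilinearSeries.ofScalars ℂ b).radius := by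
      rw [hrad]
      exact edist_lt_top z 0
    exact (hball.analyticAt_of_mem hz).differentiableAt
  have hgsum : ∀ z : ℂ, g z = ∑' n : ℕ, b n * z ^ n := by
    intro z
    have h := FormalMultilinearSeries.ofScalars_sum_eq b z
    simp only [smul_eq_mul] at h
    exact h
  have hML : ∀ (j : ℕ) (z : ℂ), mittagLeffler α (β - j) z =
      ∑' n : ℕ, (Complex.Gamma ((α * n + (β - j) : ℝ) : ℂ))⁻¹ * z ^ n := fun j z =>
    tsum_congr fun n => by rw [div_eq_mul_inv, mul_comm]
  have hsml : ∀ (j : ℕ) (z : ℂ), Summable (fun n : ℕ =>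
      (Complex.Gamma ((α * n + (β - j) : ℝ) : ℂ))⁻¹ * z ^ n) := fun j z => summable_ML _ hα z
  have ha0 : ∀ n < k, a n = 0 := by
    intro n hn
    have hcast : ∀ j : ℕ, ((α * n + (β - j) : ℝ) : ℂ) = ((α * n + β : ℝ) : ℂ) - j := by
      intro j; push_cast; ring
    calc a n = ∑ j ∈ Finset.range (k + 1), (djcoef α β k j : ℂ) *
            ((∏ i ∈ Finset.range j, (((α * n + β : ℝ) : ℂ) - (i + 1))) *
              (Complex.Gamma ((α * n + β : ℝ) : ℂ))⁻¹) := by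
          refine Finset.sum_congr rfl fun j _ => ?_
          rw [hcast j, inv_gamma_sub_nat]
      _ = (∑ j ∈ Finset.range (k + 1), (djcoef α β k j : ℂ) *
            ∏ i ∈ Finset.range j, (((α * n + β : ℝ) : ℂ) - (i + 1))) *
            (Complex.Gamma ((α * n + β : ℝ) : ℂ))⁻¹ := by
          rw [Finset.sum_mul]; exact Finset.sum_congr rfl fun j _ => by ring
      _ = (∏ m ∈ Finset.range k, (((α * n + β : ℝ) : ℂ) - ((α * m + β : ℝ) : ℂ))) *
            (Complex.Gamma ((α * n + β : ℝ) : ℂ))⁻¹ := by rw [key_poly]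
      _ = 0 := by
          refine mul_eq_zero_of_left (Finset.prod_eq_zero (Finset.mem_range.2 hn) ?_) _
          exact sub_self _
  have hid : ∀ z : ℂ, ∑ j ∈ Finset.range (k + 1), (djcoef α β k j : ℂ) *
      mittagLeffler α (β - j) z = z ^ k * g z := by
    intro z
    have hsummable : Summable (fun n => a n * z ^ n) := by
      apply Summable.of_norm
      refine (hsum_a ‖z‖ (norm_nonneg z)).congr fun n => ?_
      rw [norm_mul, norm_pow]
    have h1 : ∑ j ∈ Finset.range (k + 1), (djcoef α β k j : ℂ) * mittagLeffler α (β - j) z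
        = ∑' n : ℕ, a n * z ^ n := by
      calc ∑ j ∈ Finset.range (k + 1), (djcoef α β k j : ℂ) * mittagLeffler α (β - j) z
          = ∑ j ∈ Finset.range (k + 1), ∑' n : ℕ, (djcoef α β k j : ℂ) *
              ((Complex.Gamma ((α * n + (β - j) : ℝ) : ℂ))⁻¹ * z ^ n) := by
            refine Finset.sum_congr rfl fun j _ => ?_
            rw [hML j z, tsum_mul_left]
        _ = ∑' n : ℕ, ∑ j ∈ Finset.range (k + 1), (djcoef α β k j : ℂ) *
              ((Complex.Gamma ((α * n + (β - j) : ℝ) : ℂ))⁻¹ * z ^ n) :=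
            (Summable.tsum_finsetSum fun j _ => ((hsml j z).mul_left _)).symm
        _ = ∑' n : ℕ, a n * z ^ n := by
            refine tsum_congr fun n => ?_
            rw [ha_def]
            simp only []
            rw [Finset.sum_mul]
            exact Finset.sum_congr rfl fun j _ => by ring
    rw [h1, ← hsummable.sum_add_tsum_nat_add k]
    have hz0 : ∑ i ∈ Finset.range k, a i * z ^ i = 0 :=
      Finset.sum_eq_zero fun i hi => by rw [ha0 i (Finset.mem_range.1 hi), zero_mul]
    rw [hz0, zero_add]
    calc ∑' n : ℕ, a (n + k) * z ^ (n + k)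
        = ∑' n : ℕ, z ^ k * (b n * z ^ n) := by
          refine tsum_congr fun n => ?_
          have hb : b n = a (n + k) := rfl
          rw [hb, pow_add]; ring
      _ = z ^ k * ∑' n : ℕ, b n * z ^ n := by rw [tsum_mul_left]
      _ = z ^ k * g z := by rw [hgsum z]
  refine ⟨⟨g, hgdiff, hid⟩, ?_⟩
  have h2 : (fun z : ℂ => z ^ k * g z) =O[nhds 0] (fun z : ℂ => z ^ k) := by
    simpa using (Asymptotics.isBigO_refl (fun z : ℂ => z ^ k) (nhds 0)).mul
      ((hgdiff.continuous.tendsto 0).isBigO_one ℂ)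
  exact h2.congr' (Filter.Eventually.of_forall fun z => (hid z).symm) Filter.EventuallyEq.rfl
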